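/- Let a₁ = (1,0), a₂ = (−1/2, √3/2), a₃ = (−1/2, −√3/2) in ℝ², and set ω² = 2/√3. Then for each i ∈ {1,2,3}: ω²·aᵢ = Σ_{j≠i} (aᵢ − aⱼ)·(‖aᵢ − aⱼ‖^(−3) + 3‖aᵢ − aⱼ‖^(−5)). In other words, the equal-mass equilateral triangle inscribed in the unit circle is a central configuration of the Schwarzschild potential with multiplier ω² = 2/√3. -/

import Mathlib

/-!
All three sides of the triangle have length `√3`, so every term of the sum carries the same
coefficient `√3⁻³ + 3·√3⁻⁵ = 2/(3√3)`. Since the vertices sum to zero,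
`∑_{j ≠ i} (aᵢ - aⱼ) = 3 aᵢ`, and the right-hand side is `3 · 2/(3√3) · aᵢ = (2/√3) aᵢ`.
The same computation shows that any centred configuration with all mutual distances equal is a
central configuration of every radial potential.
-/

open Finset

/-- The vertices of the equilateral triangle inscribed in the unit circle. -/
noncomputable def a3 : Fin 3 → EuclideanSpace ℝ (Fin 2) :=
  ![!₂[1, 0], !₂[-(1/2), Real.sqrt 3 / 2], !₂[-(1/2), -(Real.sqrt 3 / 2)]]

theorem sum_smul_sub_eq_of_sum_eq_zero_of_pairwise_norm_sub_eq {ι E : Type*} [Fintype ι]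
    [DecidableEq ι] [SeminormedAddCommGroup E] [Module ℝ E] {a : ι → E} {r : ℝ}
    (hsum : ∑ j, a j = 0) (hdist : Pairwise fun i j ↦ ‖a i - a j‖ = r) (f : ℝ → ℝ) (i : ι) :
    ∑ j ∈ univ \ {i}, f ‖a i - a j‖ • (a i - a j) = (Fintype.card ι * f r) • a i := by
  calc ∑ j ∈ univ \ {i}, f ‖a i - a j‖ • (a i - a j)
      = f r • ∑ j ∈ univ \ {i}, (a i - a j) := by
        rw [smul_sum]
        refine sum_congr rfl fun j hj ↦ ?_
        rw [hdist (Ne.symm (by simpa using hj))]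
    _ = f r • ∑ j, (a i - a j) := by
        congr 1
        exact sum_subset (subset_univ _) fun j _ hj ↦ by simp_all
    _ = (Fintype.card ι * f r) • a i := by
        rw [sum_sub_distrib, sum_const, card_univ, hsum, sub_zero, ← Nat.cast_smul_eq_nsmul ℝ,
          smul_smul, mul_comm]

lemma sum_a3 : ∑ j, a3 j = 0 := by
  ext k
  fin_cases k <;> simp [a3, Fin.sum_univ_three]
  ring

lemma norm_a3_sub_a3 : Pairwise fun i j ↦ ‖a3 i - a3 j‖ = √3 := by
  have hs : √3 ^ 2 = 3 := Real.sq_sqrt (by norm_num)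
  intro i j hij
  rw [EuclideanSpace.norm_eq, Fin.sum_univ_two]
  congr 1
  fin_cases i <;> fin_cases j <;> simp [a3] at hij ⊢ <;> ring_nf <;> norm_num [hs]

lemma three_mul_sqrt_three_zpow_add : 3 * (√3 ^ (-3 : ℤ) + 3 * √3 ^ (-5 : ℤ)) = 2 / √3 := by
  have hs : √3 ^ 2 = 3 := Real.sq_sqrt (by norm_num)
  have hne : √3 ≠ 0 := by positivity
  rw [show (-3 : ℤ) = -(3 : ℕ) by rfl, show (-5 : ℤ) = -(5 : ℕ) by rfl, zpow_neg, zpow_neg,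
    zpow_natCast, zpow_natCast]
  field_simp
  rw [show √3 ^ 4 = (√3 ^ 2) ^ 2 by ring, hs]
  norm_num

/-- The equal-mass equilateral triangle inscribed in the unit circle is a central
configuration of the Schwarzschild potential with multiplier `ω² = 2/√3`. -/
theorem triangle_central_config_schwarzschild :
    ∀ i : Fin 3,
      (2 / Real.sqrt 3) • a3 i =
        ∑ j ∈ Finset.univ \ {i},
          (‖a3 i - a3 j‖ ^ (-3 : ℤ) + 3 * ‖a3 i - a3 j‖ ^ (-5 : ℤ)) • (a3 i - a3 j) := by
  intro i
  calc (2 / √3) • a3 i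
      = (Fintype.card (Fin 3) * (√3 ^ (-3 : ℤ) + 3 * √3 ^ (-5 : ℤ))) • a3 i := by
        rw [Fintype.card_fin, Nat.cast_ofNat, three_mul_sqrt_three_zpow_add]
    _ = _ := (sum_smul_sub_eq_of_sum_eq_zero_of_pairwise_norm_sub_eq sum_a3 norm_a3_sub_a3
        (fun t ↦ t ^ (-3 : ℤ) + 3 * t ^ (-5 : ℤ)) i).symm
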